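/- Let F be an F∞-field and a, b, c, d ∈ F with ac + bd = ad + bc, a + b ≠ 0, and c + d ≠ 0. Let C be the smallest congruence on F containing the pair (a, b) (the intersection of all congruences containing (a,b)). Then every pair (x, y) ∈ C satisfies xc + yd = xd + yc. -/

import Mathlib

class FinfModule (M : Type*) extends Zero M, Neg M, Add M where
  add_assoc : ∀ a b c : M, a + b + c = a + (b + c)
  add_comm : ∀ a b : M, a + b = b + a
  add_idem : ∀ a : M, a + a = a
  add_neg : ∀ a : M, a + -a = 0
  neg_add : ∀ a b : M, -(a + b) = -a + -b
  neg_neg : ∀ a : M, - -a = a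

class FinfAlgebra (A : Type*) extends FinfModule A, Mul A where
  mul_assoc : ∀ a b c : A, a * b * c = a * (b * c)
  mul_zero : ∀ a : A, a * 0 = 0
  zero_mul : ∀ a : A, 0 * a = 0
  neg_mul : ∀ a b : A, -a * b = -(a * b)
  mul_neg : ∀ a b : A, a * -b = -(a * b)
  left_distrib : ∀ a b c : A, a * (b + c) = a * b + a * c
  right_distrib : ∀ a b c : A, (a + b) * c = a * c + b * c

class FinfUnitalAlgebra (A : Type*) extends FinfAlgebra A, One A where
  one_mul : ∀ a : A, 1 * a = a
  mul_one : ∀ a : A, a * 1 = a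

class FinfCommAlgebra (A : Type*) extends FinfUnitalAlgebra A where
  mul_comm : ∀ a b : A, a * b = b * a

structure FinfModCong (M : Type*) [FinfModule M] where
  rel : M → M → Prop
  refl : ∀ a : M, rel a a
  symm : ∀ {a b : M}, rel a b → rel b a
  trans : ∀ {a b c : M}, rel a b → rel b c → rel a c
  add_compat : ∀ {a b : M} (c : M), rel a b → rel (a + c) (b + c)
  neg_compat : ∀ {a b : M}, rel a b → rel (-a) (-b)

structure FinfCong (A : Type*) [FinfAlgebra A] extends FinfModCong A where
  mul_compat : ∀ {a b : A} (c : A), rel a b → rel (a * c) (b * c)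

/-!
Write `u ~ v` for `u c + v d = u d + v c`. This relation is reflexive, symmetric and compatible
with `+`, `-` and multiplication, but need not be transitive. It is transitive along `u ~ v ~ w`
when `u + v ≠ 0`: then `(u + v)(c + d) = u c + v d` is nonzero and cancels from
`(u c + w d)(u c + v d) = (u d + w c)(u c + v d)`, which follows from `u ~ v` and `v ~ w` by
comparing monomials in the order `x ≤ y ↔ x + y = y`. The case `u + v = 0` is excluded by
intersecting with the congruence "`u ≤ t v` and `v ≤ t u` for some nonzero `t ≥ 1`", under which
`u + v = 0` forces `u = v = 0`. The intersection is a congruence containing `(a, b)`, hence `C`.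
-/

namespace FinfModule

variable {M : Type*} [FinfModule M] {x y z x' y' : M}

instance : Std.Associative (α := M) (· + ·) := ⟨FinfModule.add_assoc⟩
instance : Std.Commutative (α := M) (· + ·) := ⟨FinfModule.add_comm⟩
instance : Std.IdempotentOp (α := M) (· + ·) := ⟨FinfModule.add_idem⟩

theorem zero_add (x : M) : 0 + x = 0 :=
  calc 0 + x = x + -x + x := by rw [FinfModule.add_neg]
    _ = x + -x := by ac_rfl
    _ = 0 := FinfModule.add_neg x

theorem add_zero (x : M) : x + 0 = 0 := by
  rw [FinfModule.add_comm, FinfModule.zero_add]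

/-- The order of the semilattice `(M, +)`; `0` is its greatest element. -/
instance : PartialOrder M where
  le x y := x + y = y
  le_refl := FinfModule.add_idem
  le_trans x y z (hxy : x + y = y) (hyz : y + z = z) := show x + z = z by
    rw [← hyz, ← FinfModule.add_assoc, hxy]
  le_antisymm x y (hxy : x + y = y) (hyx : y + x = x) :=
    hyx.symm.trans ((FinfModule.add_comm y x).trans hxy)

theorem le_def : x ≤ y ↔ x + y = y := Iff.rfl

theorem le_zero (x : M) : x ≤ 0 := add_zero x

theorem le_add_right : x ≤ x + y := le_def.2 (by ac_rfl)

theorem le_add_left : y ≤ x + y := le_def.2 (by ac_rfl)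

theorem add_le_iff : x + y ≤ z ↔ x ≤ z ∧ y ≤ z :=
  ⟨fun h => ⟨le_add_right.trans h, le_add_left.trans h⟩, fun ⟨hx, hy⟩ => le_def.2 <| by
    rw [FinfModule.add_assoc, le_def.1 hy, le_def.1 hx]⟩

theorem add_le_add (hx : x ≤ x') (hy : y ≤ y') : x + y ≤ x' + y' :=
  add_le_iff.2 ⟨hx.trans le_add_right, hy.trans le_add_left⟩

theorem le_of_add_eq_add (h : x + y = x' + y') (hx : x ≤ z) (hy : y ≤ z) : x' ≤ z ∧ y' ≤ z :=
  add_le_iff.1 (h ▸ add_le_iff.2 ⟨hx, hy⟩)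

theorem neg_le_neg (h : x ≤ y) : -x ≤ -y := by
  rw [le_def, ← FinfModule.neg_add, le_def.1 h]

end FinfModule

namespace FinfAlgebra

variable {A : Type*} [FinfAlgebra A] {x y z x' y' : A}

instance : Std.Associative (α := A) (· * ·) := ⟨FinfAlgebra.mul_assoc⟩

theorem add_mul_add (x y z z' : A) : (x + y) * (z + z') = x * z + x * z' + (y * z + y * z') := by
  rw [FinfAlgebra.right_distrib, FinfAlgebra.left_distrib, FinfAlgebra.left_distrib]

theorem mul_le_mul_right (h : x ≤ y) (z : A) : x * z ≤ y * z := by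
  rw [FinfModule.le_def, ← FinfAlgebra.right_distrib, FinfModule.le_def.1 h]

theorem mul_le_mul_left (h : x ≤ y) (z : A) : z * x ≤ z * y := by
  rw [FinfModule.le_def, ← FinfAlgebra.left_distrib, FinfModule.le_def.1 h]

theorem mul_le_mul (hx : x ≤ x') (hy : y ≤ y') : x * y ≤ x' * y' :=
  (mul_le_mul_right hx y).trans (mul_le_mul_left hy x')

theorem le_of_mul_add_eq (t : A) (h : x + y = x' + y') (hx : t * x ≤ z) (hy : t * y ≤ z) :
    t * x' ≤ z ∧ t * y' ≤ z :=
  FinfModule.le_of_add_eq_add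
    (by rw [← FinfAlgebra.left_distrib, h, FinfAlgebra.left_distrib]) hx hy

end FinfAlgebra

theorem FinfUnitalAlgebra.one_ne_zero_of_ne_zero {A : Type*} [FinfUnitalAlgebra A] {x : A}
    (hx : x ≠ 0) : (1 : A) ≠ 0 := fun h =>
  hx (by rw [← FinfUnitalAlgebra.mul_one x, h, FinfAlgebra.mul_zero])

namespace FinfCommAlgebra

variable {A : Type*} [FinfCommAlgebra A]

instance : Std.Commutative (α := A) (· * ·) := ⟨FinfCommAlgebra.mul_comm⟩

theorem le_mul_of_one_le {t : A} (ht : 1 ≤ t) (x : A) : x ≤ t * x :=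
  (FinfUnitalAlgebra.one_mul x).symm.trans_le (FinfAlgebra.mul_le_mul_right ht x)

end FinfCommAlgebra

def IsFinfField (F : Type*) [FinfCommAlgebra F] : Prop :=
  ∀ a : F, a ≠ 0 → ∃ b : F, a * b = 1

namespace IsFinfField

variable {F : Type*} [FinfCommAlgebra F] {x y z : F}

theorem mul_ne_zero (hF : IsFinfField F) (hx : x ≠ 0) (hy : y ≠ 0) : x * y ≠ 0 := by
  intro hxy
  obtain ⟨y', hy'⟩ := hF y hy
  apply hx
  rw [← FinfUnitalAlgebra.mul_one x, ← hy', ← FinfAlgebra.mul_assoc, hxy, FinfAlgebra.zero_mul]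

theorem mul_right_cancel (hF : IsFinfField F) (hz : z ≠ 0) (h : x * z = y * z) : x = y := by
  obtain ⟨z', hz'⟩ := hF z hz
  rw [← FinfUnitalAlgebra.mul_one x, ← FinfUnitalAlgebra.mul_one y, ← hz',
    ← FinfAlgebra.mul_assoc, ← FinfAlgebra.mul_assoc, h]

end IsFinfField

section CrossBalanced

variable {A : Type*} [FinfCommAlgebra A] {c d u v w : A}

def CrossBalanced (c d u v : A) : Prop := u * c + v * d = u * d + v * c

theorem CrossBalanced.refl (u : A) : CrossBalanced c d u u := FinfModule.add_comm _ _

theorem CrossBalanced.swap (h : CrossBalanced c d u v) : CrossBalanced d c u v := Eq.symm h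

theorem CrossBalanced.symm (h : CrossBalanced c d u v) : CrossBalanced c d v u :=
  (FinfModule.add_comm _ _).trans ((Eq.symm h).trans (FinfModule.add_comm _ _))

theorem CrossBalanced.add_right (h : CrossBalanced c d u v) (e : A) :
    CrossBalanced c d (u + e) (v + e) :=
  calc (u + e) * c + (v + e) * d = (u * c + v * d) + (e * c + e * d) := by
        simp only [FinfAlgebra.right_distrib]; ac_rfl
    _ = (u * d + v * c) + (e * c + e * d) := by rw [h]
    _ = (u + e) * d + (v + e) * c := by simp only [FinfAlgebra.right_distrib]; ac_rfl

theorem CrossBalanced.neg (h : CrossBalanced c d u v) : CrossBalanced c d (-u) (-v) := by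
  simp only [CrossBalanced, FinfAlgebra.neg_mul, ← FinfModule.neg_add]
  rw [h]

theorem CrossBalanced.mul_right (h : CrossBalanced c d u v) (e : A) :
    CrossBalanced c d (u * e) (v * e) :=
  calc u * e * c + v * e * d = (u * c + v * d) * e := by rw [FinfAlgebra.right_distrib]; ac_rfl
    _ = (u * d + v * c) * e := by rw [h]
    _ = u * e * d + v * e * c := by rw [FinfAlgebra.right_distrib]; ac_rfl

theorem CrossBalanced.add_mul_add_eq (h : CrossBalanced c d u v) :
    (u + v) * (c + d) = u * c + v * d :=
  calc (u + v) * (c + d) = (u * c + v * d) + (u * d + v * c) := by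
        rw [FinfAlgebra.add_mul_add]; ac_rfl
    _ = u * c + v * d := by rw [← h, FinfModule.add_idem]

open FinfModule FinfAlgebra in
/-- Each monomial of the left side is bounded by the right side `R`, through monomial multiples
of `h₁` and `h₂` whose other monomials are already known to be bounded by `R`. -/
theorem CrossBalanced.trans_mul_le (h₁ : CrossBalanced c d u v) (h₂ : CrossBalanced c d v w) :
    (u * c + w * d) * (u * c + v * d) ≤ (u * d + w * c) * (u * c + v * d) := by
  rw [add_mul_add, add_mul_add]
  set R := u * d * (u * c) + u * d * (v * d) + (w * c * (u * c) + w * c * (v * d))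
  have hR₁ : u * d * (u * c) ≤ R := le_add_right.trans le_add_right
  have hR₂ : u * d * (v * d) ≤ R := le_add_left.trans le_add_right
  have hR₃ : w * c * (u * c) ≤ R := le_add_right.trans le_add_left
  have hR₄ : w * c * (v * d) ≤ R := le_add_left.trans le_add_left
  obtain ⟨h_wc_ud, -⟩ := le_of_mul_add_eq (w * c) h₁ hR₃ hR₄
  obtain ⟨h_ud_vc, h_ud_wd⟩ := le_of_mul_add_eq (u * d) h₂.swap hR₂
    (Eq.trans_le (by ac_rfl) h_wc_ud)
  obtain ⟨h_uc_vc, -⟩ := le_of_mul_add_eq (u * c) h₂.swap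
    (Eq.trans_le (by ac_rfl) h_ud_vc) (Eq.trans_le (by ac_rfl) hR₃)
  obtain ⟨h_uc_uc, h_uc_vd⟩ := le_of_mul_add_eq (u * c) h₁.swap
    (Eq.trans_le (by ac_rfl) hR₁) h_uc_vc
  obtain ⟨h_wd_uc, h_wd_vd⟩ := le_of_mul_add_eq (w * d) h₁.swap
    (Eq.trans_le (by ac_rfl) h_ud_wd) (Eq.trans_le (by ac_rfl) hR₄)
  exact FinfModule.add_le_iff.2
    ⟨FinfModule.add_le_iff.2 ⟨h_uc_uc, h_uc_vd⟩, FinfModule.add_le_iff.2 ⟨h_wd_uc, h_wd_vd⟩⟩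

theorem CrossBalanced.trans (hF : IsFinfField A) (hcd : c + d ≠ 0) (huv : u + v ≠ 0)
    (h₁ : CrossBalanced c d u v) (h₂ : CrossBalanced c d v w) : CrossBalanced c d u w := by
  have hs : u * c + v * d ≠ 0 := h₁.add_mul_add_eq ▸ hF.mul_ne_zero huv hcd
  have h_ge := h₁.swap.trans_mul_le h₂.swap
  rw [show u * d + v * c = u * c + v * d from Eq.symm h₁] at h_ge
  exact hF.mul_right_cancel hs (le_antisymm (h₁.trans_mul_le h₂) h_ge)

end CrossBalanced

section Comparable

open FinfModule FinfAlgebra FinfCommAlgebra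

variable {F : Type*} [FinfCommAlgebra F] {u v w : F}

def Comparable (u v : F) : Prop := ∃ t : F, t ≠ 0 ∧ 1 ≤ t ∧ u ≤ t * v ∧ v ≤ t * u

theorem Comparable.refl (h1 : (1 : F) ≠ 0) (u : F) : Comparable u u :=
  ⟨1, h1, le_rfl, (FinfUnitalAlgebra.one_mul u).symm.le, (FinfUnitalAlgebra.one_mul u).symm.le⟩

theorem Comparable.symm : Comparable u v → Comparable v u
  | ⟨t, ht, h1t, huv, hvu⟩ => ⟨t, ht, h1t, hvu, huv⟩

theorem Comparable.trans (hF : IsFinfField F) :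
    Comparable u v → Comparable v w → Comparable u w
  | ⟨t, ht, h1t, huv, hvu⟩, ⟨s, hs, h1s, hvw, hwv⟩ =>
    ⟨t * s, hF.mul_ne_zero ht hs,
      (FinfUnitalAlgebra.one_mul 1).symm.trans_le (mul_le_mul h1t h1s),
      huv.trans ((mul_le_mul_left hvw t).trans (FinfAlgebra.mul_assoc t s w).symm.le),
      hwv.trans ((mul_le_mul_left hvu s).trans (by rw [← FinfAlgebra.mul_assoc, mul_comm s t]))⟩

theorem Comparable.add_right (h : Comparable u v) (e : F) : Comparable (u + e) (v + e) :=
  let ⟨t, ht, h1t, huv, hvu⟩ := h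
  ⟨t, ht, h1t, by rw [FinfAlgebra.left_distrib]; exact add_le_add huv (le_mul_of_one_le h1t e),
    by rw [FinfAlgebra.left_distrib]; exact add_le_add hvu (le_mul_of_one_le h1t e)⟩

theorem Comparable.neg (h : Comparable u v) : Comparable (-u) (-v) :=
  let ⟨t, ht, h1t, huv, hvu⟩ := h
  ⟨t, ht, h1t, by rw [FinfAlgebra.mul_neg]; exact neg_le_neg huv,
    by rw [FinfAlgebra.mul_neg]; exact neg_le_neg hvu⟩

theorem Comparable.mul_right (h : Comparable u v) (e : F) : Comparable (u * e) (v * e) :=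
  let ⟨t, ht, h1t, huv, hvu⟩ := h
  ⟨t, ht, h1t, by rw [← FinfAlgebra.mul_assoc]; exact mul_le_mul_right huv e,
    by rw [← FinfAlgebra.mul_assoc]; exact mul_le_mul_right hvu e⟩

theorem Comparable.eq_zero_of_add_eq_zero (hF : IsFinfField F) (h : Comparable u v)
    (huv : u + v = 0) : u = 0 := by
  obtain ⟨t, ht, h1t, -, hvu⟩ := h
  have h_top : 0 ≤ t * u := huv ▸ add_le_iff.2 ⟨le_mul_of_one_le h1t u, hvu⟩
  by_contra hu
  exact hF.mul_ne_zero ht hu (le_antisymm (le_zero _) h_top)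

theorem Comparable.eq_of_add_eq_zero (hF : IsFinfField F) (h : Comparable u v)
    (huv : u + v = 0) : u = v :=
  (h.eq_zero_of_add_eq_zero hF huv).trans
    (h.symm.eq_zero_of_add_eq_zero hF ((FinfModule.add_comm v u).trans huv)).symm

/-- The witness is `t = (a + b)² / (a b)`. -/
theorem comparable_of_add_ne_zero (hF : IsFinfField F) {a b : F} (hab : a + b ≠ 0) :
    Comparable a b := by
  have ha : a ≠ 0 := by rintro rfl; exact hab (FinfModule.zero_add b)
  have hb : b ≠ 0 := by rintro rfl; exact hab (FinfModule.add_zero a)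
  obtain ⟨a', ha'⟩ := hF a ha
  obtain ⟨b', hb'⟩ := hF b hb
  have inv_ne_zero {x x' : F} (hx : x ≠ 0) (hx' : x * x' = 1) : x' ≠ 0 := by
    rintro rfl
    exact FinfUnitalAlgebra.one_ne_zero_of_ne_zero hx (hx'.symm.trans (FinfAlgebra.mul_zero x))
  set s := (a + b) * (a + b)
  have hs : s ≠ 0 := hF.mul_ne_zero hab hab
  have mul_inv {x y z x' z' : F} (hx' : x * x' = 1) (hz' : z * z' = 1) :
      x * y * (x' * z') * z = y := by
    calc x * y * (x' * z') * z = y * (x * x') * (z * z') := by ac_rfl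
      _ = y := by rw [hx', hz', FinfUnitalAlgebra.mul_one, FinfUnitalAlgebra.mul_one]
  refine ⟨s * (a' * b'),
    hF.mul_ne_zero hs (hF.mul_ne_zero (inv_ne_zero ha ha') (inv_ne_zero hb hb')), ?_, ?_, ?_⟩
  · calc (1 : F) = a * a' * (b * b') := by rw [ha', hb', FinfUnitalAlgebra.mul_one]
      _ = a * b * (a' * b') := by ac_rfl
      _ ≤ s * (a' * b') :=
        FinfAlgebra.mul_le_mul_right (FinfAlgebra.mul_le_mul le_add_right le_add_left) _
  · calc a = a * a * (a' * b') * b := (mul_inv ha' hb').symm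
      _ ≤ s * (a' * b') * b := FinfAlgebra.mul_le_mul_right
        (FinfAlgebra.mul_le_mul_right (FinfAlgebra.mul_le_mul le_add_right le_add_right) _) _
  · calc b = b * b * (a' * b') * a := by rw [mul_comm a' b', mul_inv hb' ha']
      _ ≤ s * (a' * b') * a := FinfAlgebra.mul_le_mul_right
        (FinfAlgebra.mul_le_mul_right (FinfAlgebra.mul_le_mul le_add_left le_add_left) _) _

end Comparable

def crossBalancedCong {F : Type*} [FinfCommAlgebra F] (hF : IsFinfField F) {c d : F}
    (hcd : c + d ≠ 0) : FinfCong F where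
  rel u v := CrossBalanced c d u v ∧ Comparable u v
  refl u := ⟨.refl u, .refl (FinfUnitalAlgebra.one_ne_zero_of_ne_zero hcd) u⟩
  symm h := ⟨h.1.symm, h.2.symm⟩
  trans {u v w} h₁ h₂ := by
    refine ⟨?_, h₁.2.trans hF h₂.2⟩
    by_cases huv : u + v = 0
    · exact h₁.2.eq_of_add_eq_zero hF huv ▸ h₂.1
    · exact h₁.1.trans hF hcd huv h₂.1
  add_compat e h := ⟨h.1.add_right e, h.2.add_right e⟩
  neg_compat h := ⟨h.1.neg, h.2.neg⟩
  mul_compat e h := ⟨h.1.mul_right e, h.2.mul_right e⟩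

theorem stmt15 {F : Type*} [FinfCommAlgebra F]
    (hF : ∀ a : F, a ≠ 0 → ∃ b : F, a * b = 1)
    (a b c d : F) (h : a * c + b * d = a * d + b * c)
    (hab : a + b ≠ 0) (hcd : c + d ≠ 0) (x y : F)
    (hxy : ∀ D : FinfCong F, D.rel a b → D.rel x y) :
    x * c + y * d = x * d + y * c :=
  (hxy (crossBalancedCong hF hcd) ⟨h, comparable_of_add_ne_zero hF hab⟩).1
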